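/- Telescoping identity (step in the proof of Lemma 1). Let a finite Markov decision process with discount factor γ ∈ [0,1) be given. For any function f : S × A × S → ℝ and any stationary policies π and π', one has J_f(π') = Σ_{t=0}^∞ γ^t · Σ_{s,a} μ_t^{π'}(s) · π'(a|s) · A_f^π(s,a) + Σ_{s∈S} μ(s) · V_f^π(s), where all series converge absolutely. -/
import Mathlib


open Finset

/-- A finite Markov decision process. -/
structure MDP (S A : Type) [Fintype S] [Fintype A] where
  P : S → A → S → ℝ
  P_nonneg : ∀ s a s', 0 ≤ P s a s'
  P_sum : ∀ s a, ∑ s', P s a s' = 1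
  μ : S → ℝ
  μ_nonneg : ∀ s, 0 ≤ μ s
  μ_sum : ∑ s, μ s = 1
  γ : ℝ
  γ_nonneg : 0 ≤ γ
  γ_lt_one : γ < 1

/-- A stationary policy: a probability distribution over actions for each state. -/
def IsPolicy {S A : Type} [Fintype S] [Fintype A] (π : S → A → ℝ) : Prop :=
  (∀ s a, 0 ≤ π s a) ∧ (∀ s, ∑ a, π s a = 1)

/-- The time-`t` state distribution `μ_t^π`. -/
def stateDist {S A : Type} [Fintype S] [Fintype A] (M : MDP S A) (π : S → A → ℝ) :
    ℕ → S → ℝ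
  | 0 => M.μ
  | (t + 1) => fun s' => ∑ s, ∑ a, stateDist M π t s * π s a * M.P s a s'

/-- The expected discounted return `J_f(π)`. -/
noncomputable def Jret {S A : Type} [Fintype S] [Fintype A] (M : MDP S A)
    (π : S → A → ℝ) (f : S → A → S → ℝ) : ℝ :=
  ∑' t : ℕ, M.γ ^ t * ∑ s, ∑ a, ∑ s', stateDist M π t s * π s a * M.P s a s' * f s a s'

/-- The discounted future state distribution `d^π`. -/
noncomputable def dDist {S A : Type} [Fintype S] [Fintype A] (M : MDP S A)
    (π : S → A → ℝ) (s : S) : ℝ :=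
  (1 - M.γ) * ∑' t : ℕ, M.γ ^ t * stateDist M π t s

/-- `V` satisfies the Bellman equation for `f` under policy `π`. -/
def IsValue {S A : Type} [Fintype S] [Fintype A] (M : MDP S A) (π : S → A → ℝ)
    (f : S → A → S → ℝ) (V : S → ℝ) : Prop :=
  ∀ s, V s = ∑ a, π s a * ∑ s', M.P s a s' * (f s a s' + M.γ * V s')

/-- The advantage function `A_f^π` built from a value function `V`. -/
def adv {S A : Type} [Fintype S] [Fintype A] (M : MDP S A)
    (f : S → A → S → ℝ) (V : S → ℝ) (s : S) (a : A) : ℝ :=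
  (∑ s', M.P s a s' * (f s a s' + M.γ * V s')) - V s

section Aux

variable {S A : Type} [Fintype S] [Fintype A]

lemma stateDist_nonneg (M : MDP S A) (π : S → A → ℝ) (hπ : IsPolicy π) :
    ∀ t s, 0 ≤ stateDist M π t s := by
  intro t
  induction t with
  | zero => exact M.μ_nonneg
  | succ t ih =>
    intro s'
    apply Finset.sum_nonneg; intro s _
    apply Finset.sum_nonneg; intro a _
    exact mul_nonneg (mul_nonneg (ih s) (hπ.1 s a)) (M.P_nonneg s a s')

lemma stateDist_sum (M : MDP S A) (π : S → A → ℝ) (hπ : IsPolicy π) :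
    ∀ t, ∑ s, stateDist M π t s = 1 := by
  intro t
  induction t with
  | zero => exact M.μ_sum
  | succ t ih =>
    show ∑ s', ∑ s, ∑ a, stateDist M π t s * π s a * M.P s a s' = 1
    rw [Finset.sum_comm]
    calc ∑ s, ∑ s', ∑ a, stateDist M π t s * π s a * M.P s a s'
        = ∑ s, stateDist M π t s := by
          apply Finset.sum_congr rfl; intro s _
          rw [Finset.sum_comm]
          calc ∑ a, ∑ s', stateDist M π t s * π s a * M.P s a s'
              = ∑ a, stateDist M π t s * π s a := by
                apply Finset.sum_congr rfl; intro a _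
                rw [← Finset.mul_sum, M.P_sum, mul_one]
            _ = stateDist M π t s := by rw [← Finset.mul_sum, hπ.2, mul_one]
      _ = 1 := ih

/-- Bound on a policy-weighted average. -/
lemma weighted_bound (M : MDP S A) (π : S → A → ℝ) (hπ : IsPolicy π) (t : ℕ)
    (h : S → A → ℝ) (C : ℝ) (hC : ∀ s a, |h s a| ≤ C) :
    |∑ s, ∑ a, stateDist M π t s * π s a * h s a| ≤ C := by
  calc |∑ s, ∑ a, stateDist M π t s * π s a * h s a|
      ≤ ∑ s, ∑ a, |stateDist M π t s * π s a * h s a| := by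
        refine le_trans (Finset.abs_sum_le_sum_abs _ _) ?_
        exact Finset.sum_le_sum fun s _ => Finset.abs_sum_le_sum_abs _ _
    _ ≤ ∑ s, ∑ a, stateDist M π t s * π s a * C := by
        refine Finset.sum_le_sum fun s _ => Finset.sum_le_sum fun a _ => ?_
        rw [abs_mul, abs_of_nonneg (mul_nonneg (stateDist_nonneg M π hπ t s) (hπ.1 s a))]
        exact mul_le_mul_of_nonneg_left (hC s a)
          (mul_nonneg (stateDist_nonneg M π hπ t s) (hπ.1 s a))
    _ = C := by
        have : ∀ s, ∑ a, stateDist M π t s * π s a * C = stateDist M π t s * C := by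
          intro s
          rw [← Finset.sum_mul, ← Finset.mul_sum, hπ.2, mul_one]
        simp only [this]
        rw [← Finset.sum_mul, stateDist_sum M π hπ, one_mul]

end Aux

lemma exists_abs_bound {ι : Type} [Fintype ι] (g : ι → ℝ) :
    ∃ C : ℝ, 0 ≤ C ∧ ∀ i, |g i| ≤ C :=
  ⟨∑ i, |g i|, Finset.sum_nonneg fun i _ => abs_nonneg _,
    fun i => Finset.single_le_sum (f := fun j => |g j|) (fun x _ => abs_nonneg _) (Finset.mem_univ i)⟩

set_option maxHeartbeats 1000000 in
/-- Telescoping identity: a step in the proof of Lemma 1. -/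
theorem telescoping_identity {S A : Type} [Fintype S] [Fintype A]
    [Nonempty S] [Nonempty A] (M : MDP S A) (f : S → A → S → ℝ)
    (π π' : S → A → ℝ) (hπ : IsPolicy π) (hπ' : IsPolicy π')
    (V : S → ℝ) (hV : IsValue M π f V) :
    Summable (fun t : ℕ =>
      M.γ ^ t * ∑ s, ∑ a, ∑ s', stateDist M π' t s * π' s a * M.P s a s' * f s a s') ∧
    Summable (fun t : ℕ =>
      M.γ ^ t * ∑ s, ∑ a, stateDist M π' t s * π' s a * adv M f V s a) ∧
    Jret M π' f =
      (∑' t : ℕ, M.γ ^ t * ∑ s, ∑ a, stateDist M π' t s * π' s a * adv M f V s a)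
        + ∑ s, M.μ s * V s := by
  classical
  set D := stateDist M π' with hD
  -- bounds
  obtain ⟨Cf, hCf0, hfC'⟩ := exists_abs_bound (fun p : S × A × S => f p.1 p.2.1 p.2.2)
  obtain ⟨CV, hCV0, hVC'⟩ := exists_abs_bound V
  have hfC : ∀ s a s', |f s a s'| ≤ Cf := fun s a s' => hfC' ⟨s, a, s'⟩
  have hVC : ∀ s, |V s| ≤ CV := hVC'
  -- bound on ∑ s' P * (...)
  have hPavg : ∀ (g : S → ℝ) (C : ℝ), (∀ s', |g s'| ≤ C) → ∀ s a,
      |∑ s', M.P s a s' * g s'| ≤ C := by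
    intro g C hg s a
    calc |∑ s', M.P s a s' * g s'| ≤ ∑ s', |M.P s a s' * g s'| :=
          Finset.abs_sum_le_sum_abs _ _
      _ ≤ ∑ s', M.P s a s' * C := by
          refine Finset.sum_le_sum fun s' _ => ?_
          rw [abs_mul, abs_of_nonneg (M.P_nonneg s a s')]
          exact mul_le_mul_of_nonneg_left (hg s') (M.P_nonneg s a s')
      _ = C := by rw [← Finset.sum_mul, M.P_sum, one_mul]
  -- the "f-term" inner sums, rewritten as weighted averages
  have hfterm : ∀ t, ∑ s, ∑ a, ∑ s', D t s * π' s a * M.P s a s' * f s a s'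
      = ∑ s, ∑ a, D t s * π' s a * (∑ s', M.P s a s' * f s a s') := by
    intro t
    refine Finset.sum_congr rfl fun s _ => Finset.sum_congr rfl fun a _ => ?_
    rw [Finset.mul_sum]
    exact Finset.sum_congr rfl fun s' _ => by ring
  -- summability of the f-term
  have geo : Summable (fun t : ℕ => M.γ ^ t) :=
    summable_geometric_of_lt_one M.γ_nonneg M.γ_lt_one
  have sumOf : ∀ (x : ℕ → ℝ) (C : ℝ), (∀ t, |x t| ≤ C) →
      Summable (fun t : ℕ => M.γ ^ t * x t) := by
    intro x C hx
    apply Summable.of_abs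
    apply Summable.of_nonneg_of_le (fun t => abs_nonneg _) (fun t => ?_) (geo.mul_right C)
    rw [abs_mul, abs_of_nonneg (pow_nonneg M.γ_nonneg t)]
    exact mul_le_mul_of_nonneg_left (hx t) (pow_nonneg M.γ_nonneg t)
  have hsum1 : Summable (fun t : ℕ =>
      M.γ ^ t * ∑ s, ∑ a, ∑ s', D t s * π' s a * M.P s a s' * f s a s') := by
    apply sumOf _ Cf
    intro t
    rw [hfterm t]
    exact weighted_bound M π' hπ' t _ Cf (fun s a => hPavg (f s a) Cf (hfC s a) s a)
  have hadvC : ∀ s a, |adv M f V s a| ≤ Cf + M.γ * CV + CV := by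
    intro s a
    unfold adv
    refine le_trans (abs_sub _ _) (add_le_add ?_ (hVC s))
    refine le_trans (hPavg _ (Cf + M.γ * CV) (fun s' => ?_) s a) le_rfl
    refine le_trans (abs_add_le _ _) (add_le_add (hfC s a s') ?_)
    rw [abs_mul, abs_of_nonneg M.γ_nonneg]
    exact mul_le_mul_of_nonneg_left (hVC s') M.γ_nonneg
  have hsum2 : Summable (fun t : ℕ =>
      M.γ ^ t * ∑ s, ∑ a, D t s * π' s a * adv M f V s a) :=
    sumOf _ _ (fun t => weighted_bound M π' hπ' t _ _ hadvC)
  -- the telescoping sequence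
  set b : ℕ → ℝ := fun t => M.γ ^ t * ∑ s, D t s * V s with hb
  have hbC : ∀ t, |∑ s, D t s * V s| ≤ CV := by
    intro t
    have := weighted_bound M π' hπ' t (fun s a => V s) CV (fun s a => hVC s)
    calc |∑ s, D t s * V s| = |∑ s, ∑ a, D t s * π' s a * V s| := by
          congr 1
          refine Finset.sum_congr rfl fun s _ => ?_
          rw [← Finset.sum_mul, ← Finset.mul_sum, hπ'.2, mul_one]
      _ ≤ CV := this
  have hbsum : Summable b := sumOf _ CV hbC
  -- key per-step identity
  have key : ∀ t, (∑ s, ∑ a, ∑ s', D t s * π' s a * M.P s a s' * f s a s')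
      = (∑ s, ∑ a, D t s * π' s a * adv M f V s a)
        + (∑ s, D t s * V s) - M.γ * ∑ s, D (t+1) s * V s := by
    intro t
    have h1 : ∑ s'', D (t+1) s'' * V s''
        = ∑ s, ∑ a, ∑ s', D t s * π' s a * M.P s a s' * V s' := by
      calc ∑ s'', D (t+1) s'' * V s''
          = ∑ s'', ∑ s, ∑ a, D t s * π' s a * M.P s a s'' * V s'' := by
            refine Finset.sum_congr rfl fun s'' _ => ?_
            show (∑ s, ∑ a, D t s * π' s a * M.P s a s'') * V s'' = _
            rw [Finset.sum_mul]
            exact Finset.sum_congr rfl fun s _ => by rw [Finset.sum_mul]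
        _ = ∑ s, ∑ s'', ∑ a, D t s * π' s a * M.P s a s'' * V s'' :=
            Finset.sum_comm
        _ = ∑ s, ∑ a, ∑ s', D t s * π' s a * M.P s a s' * V s' :=
            Finset.sum_congr rfl fun s _ => Finset.sum_comm
    have h2 : ∑ s, D t s * V s = ∑ s, ∑ a, D t s * π' s a * V s := by
      refine Finset.sum_congr rfl fun s _ => ?_
      rw [← Finset.sum_mul, ← Finset.mul_sum, hπ'.2, mul_one]
    rw [h1, h2, Finset.mul_sum, ← Finset.sum_add_distrib, ← Finset.sum_sub_distrib]
    refine Finset.sum_congr rfl fun s _ => ?_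
    rw [Finset.mul_sum, ← Finset.sum_add_distrib, ← Finset.sum_sub_distrib]
    refine Finset.sum_congr rfl fun a _ => ?_
    unfold adv
    rw [mul_sub, Finset.mul_sum, sub_add_cancel, Finset.mul_sum, ← Finset.sum_sub_distrib]
    refine Finset.sum_congr rfl fun s' _ => ?_
    ring
  -- assemble
  have keyγ : ∀ t, M.γ ^ t * (∑ s, ∑ a, ∑ s', D t s * π' s a * M.P s a s' * f s a s')
      = M.γ ^ t * (∑ s, ∑ a, D t s * π' s a * adv M f V s a) + (b t - b (t + 1)) := by
    intro t
    rw [key t, hb]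
    simp only [pow_succ]
    ring
  have hbsucc : Summable (fun t => b (t + 1)) := (summable_nat_add_iff 1).mpr hbsum
  have hsum1' : Summable (fun t : ℕ =>
      M.γ ^ t * ∑ s, ∑ a, ∑ s', D t s * π' s a * M.P s a s' * f s a s') := hsum1
  refine ⟨hsum1, hsum2, ?_⟩
  have hb0 : b 0 = ∑ s, M.μ s * V s := by
    simp [hb, hD, stateDist, mul_comm]
  have htel : ∑' t, (b t - b (t + 1)) = ∑ s, M.μ s * V s := by
    rw [Summable.tsum_sub hbsum hbsucc]
    rw [Summable.tsum_eq_zero_add hbsum]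
    rw [hb0]
    ring
  calc Jret M π' f
      = ∑' t, (M.γ ^ t * (∑ s, ∑ a, D t s * π' s a * adv M f V s a) + (b t - b (t + 1))) := by
        unfold Jret
        exact tsum_congr keyγ
    _ = (∑' t : ℕ, M.γ ^ t * ∑ s, ∑ a, D t s * π' s a * adv M f V s a)
          + ∑' t, (b t - b (t + 1)) := Summable.tsum_add hsum2 (hbsum.sub hbsucc)
    _ = _ := by rw [htel]
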